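/- arXiv:1611.02989 — 6 statements merged into one kernel-verified Lean document; each statement's English description precedes it below -/
import Mathlib

section
/- Let P be a finite measure on the space of bounded nonnegative measurable functions on X satisfying ∫‖f‖ P(df) = 1. Define P† on measurable sets F of functions by P†(F) = ∫ 1_F(f†) ‖f‖ P(df), where f† = f/‖f‖ if ‖f‖ ≠ 0 and f† = 1 (the constant function one) otherwise. Then P† is a probability measure, and a probability measure p on X satisfies p(B) ≤ ∫‖1_B·f‖ P(df) for all Borel B if and only if p(B) ≤ ∫‖1_B·f‖ P†(df) for all Borel B. -/
open MeasureTheory Set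
open scoped ENNReal

/-- The rescaled function `f† = f / ‖f‖` (with `f† = 𝟏` when `‖f‖ = 0`). -/
noncomputable def rescaleFun {X : Type*} (f : X → ℝ≥0∞) : X → ℝ≥0∞ :=
  if (⨆ x, f x) = 0 then fun _ => 1 else fun x => f x / ⨆ y, f y

/-- The rescaled probabilistic constraint
`P†(F) = ∫ 1_F(f†) ‖f‖ P(df)`, realised as the pushforward by `f ↦ f†` of `P`
weighted by the density `f ↦ ‖f‖`. -/
noncomputable def rescaleConstraint {X : Type*} [MeasurableSpace X]
    (P : Measure (X → ℝ≥0∞)) : Measure (X → ℝ≥0∞) :=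
  (P.withDensity fun f => ⨆ x, f x).map rescaleFun


lemma rescale_sup_mul {X : Type*} (f : X → ℝ≥0∞) (hf : (⨆ x, f x) ≠ ⊤) (B : Set X) :
    (⨆ x, f x) * (⨆ x ∈ B, rescaleFun f x) = ⨆ x ∈ B, f x := by
  by_cases hs : (⨆ x, f x) = 0
  · rw [hs, zero_mul]
    refine (le_antisymm (le_trans (iSup₂_le fun x _ => le_iSup f x) hs.le) zero_le).symm
  · have hr : rescaleFun f = fun x => f x / ⨆ y, f y := by
      simp [rescaleFun, hs]
    rw [hr]
    simp only [ENNReal.mul_iSup]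
    congr 1
    ext x
    congr 1
    ext _
    rw [ENNReal.div_eq_inv_mul, ← mul_assoc, ENNReal.mul_inv_cancel hs hf, one_mul]

/-- For a probabilistic constraint `P` (a finite measure on the
bounded nonnegative measurable functions on a Polish space `X` with
`∫ ‖f‖ P(df) = 1`), the rescaled measure `P†` is a probability measure, and a
probability measure `p` on `X` is dominated by `P` if and only if it is
dominated by `P†`. -/
theorem rescaleConstraint_isProbability_and_equivalent
    (X : Type*) [TopologicalSpace X] [PolishSpace X]
    [MeasurableSpace X] [BorelSpace X]
    (P : Measure (X → ℝ≥0∞)) [IsFiniteMeasure P]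
    (hbdd : ∀ᵐ f ∂P, (⨆ x, f x) ≠ ⊤)
    (hsup : Measurable fun f : X → ℝ≥0∞ => ⨆ x, f x)
    (hsupB : ∀ B : Set X, MeasurableSet B →
      Measurable fun f : X → ℝ≥0∞ => ⨆ x ∈ B, f x)
    (hdag : Measurable (rescaleFun (X := X)))
    (hnorm : (∫⁻ f, ⨆ x, f x ∂P) = 1) :
    IsProbabilityMeasure (rescaleConstraint P) ∧
    ∀ p : Measure X, IsProbabilityMeasure p →
      ((∀ B : Set X, MeasurableSet B → p B ≤ ∫⁻ f, ⨆ x ∈ B, f x ∂P) ↔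
       (∀ B : Set X, MeasurableSet B →
          p B ≤ ∫⁻ f, ⨆ x ∈ B, f x ∂(rescaleConstraint P))) := by
  have key : ∀ B : Set X, MeasurableSet B →
      (∫⁻ f, ⨆ x ∈ B, f x ∂(rescaleConstraint P)) = ∫⁻ f, ⨆ x ∈ B, f x ∂P := by
    intro B hB
    rw [rescaleConstraint, lintegral_map (hsupB B hB) hdag,
      lintegral_withDensity_eq_lintegral_mul _ hsup
        (g := fun f => ⨆ x ∈ B, rescaleFun f x) ((hsupB B hB).comp hdag)]
    refine lintegral_congr_ae ?_
    filter_upwards [hbdd] with f hf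
    exact rescale_sup_mul f hf B
  constructor
  · constructor
    rw [rescaleConstraint, Measure.map_apply hdag MeasurableSet.univ, preimage_univ,
      withDensity_apply _ MeasurableSet.univ, setLIntegral_univ, hnorm]
  · intro p _
    constructor
    · intro h B hB
      rw [key B hB]; exact h B hB
    · intro h B hB
      rw [← key B hB]; exact h B hB
end

section
/- The rescaling operation distributes over products: for probabilistic constraints M and M', (M ⋊ M')† = M† ⋊ M'†, where M ⋊ M' is the product measure and the rescaling of a function on a product space uses the supremum norm on the product. -/
open MeasureTheory Set
open scoped ENNReal

/-- The map sending a pair of functions `(f, f')` to the function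
`f ⋊ f' : (x, x') ↦ f x * f' x'` on the product space. -/
noncomputable def rtimesFun {X : Type*} (p : (X → ℝ≥0∞) × (X → ℝ≥0∞)) : X × X → ℝ≥0∞ :=
  fun q => p.1 q.1 * p.2 q.2

lemma sup_rtimes {X : Type*} (f g : X → ℝ≥0∞) :
    (⨆ q : X × X, f q.1 * g q.2) = (⨆ x, f x) * ⨆ x, g x := by
  rw [iSup_prod]
  simp_rw [← ENNReal.mul_iSup, ← ENNReal.iSup_mul]

lemma withDensity_map_aux {α β : Type*} [MeasurableSpace α] [MeasurableSpace β]
    (μ : Measure α) {g : α → β} (hg : Measurable g) {h : β → ℝ≥0∞} (hh : Measurable h) :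
    (μ.map g).withDensity h = (μ.withDensity (h ∘ g)).map g := by
  ext s hs
  rw [withDensity_apply _ hs, MeasureTheory.Measure.map_apply hg hs,
    withDensity_apply _ (hg hs), setLIntegral_map hs hh hg]
  rfl

lemma withDensity_prod_aux {α β : Type*} [MeasurableSpace α] [MeasurableSpace β]
    (μ : Measure α) (ν : Measure β) [SFinite μ] [SFinite ν] {f : α → ℝ≥0∞} {g : β → ℝ≥0∞}
    (hf : Measurable f) (hg : Measurable g)
    [SigmaFinite (μ.withDensity f)] [SigmaFinite (ν.withDensity g)] :
    (μ.prod ν).withDensity (fun p => f p.1 * g p.2) =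
      (μ.withDensity f).prod (ν.withDensity g) := by
  refine (MeasureTheory.Measure.prod_eq fun s t hs ht => ?_).symm
  rw [withDensity_apply _ (hs.prod ht), ← Measure.prod_restrict,
    MeasureTheory.lintegral_prod_mul (hf.aemeasurable) (hg.aemeasurable),
    withDensity_apply _ hs, withDensity_apply _ ht]

lemma rescale_rtimes {X : Type*} (f g : X → ℝ≥0∞)
    (hf0 : (⨆ x, f x) ≠ 0) (hft : (⨆ x, f x) ≠ ⊤)
    (hg0 : (⨆ x, g x) ≠ 0) (hgt : (⨆ x, g x) ≠ ⊤) :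
    rescaleFun (rtimesFun (f, g)) = rtimesFun (rescaleFun f, rescaleFun g) := by
  have hs : (⨆ q : X × X, rtimesFun (f, g) q) = (⨆ x, f x) * ⨆ x, g x := sup_rtimes f g
  unfold rescaleFun
  rw [if_neg (by rw [hs]; exact mul_ne_zero hf0 hg0), if_neg hf0, if_neg hg0]
  funext q
  show rtimesFun (f, g) q / (⨆ p : X × X, rtimesFun (f, g) p) = _
  rw [hs]
  show f q.1 * g q.2 / ((⨆ x, f x) * ⨆ x, g x) =
    (f q.1 / ⨆ y, f y) * (g q.2 / ⨆ y, g y)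
  rw [div_eq_mul_inv, ENNReal.mul_inv (Or.inl hf0) (Or.inl hft),
    div_eq_mul_inv, div_eq_mul_inv, mul_mul_mul_comm]

/-- The rescaling operation distributes over products:
`(M ⋊ M')† = M† ⋊ M'†`, where `M ⋊ M'` is the image of the product measure
`M × M'` under `(f, f') ↦ f ⋊ f'` and the rescaling on the product space uses
the supremum norm on `X × X`. -/
theorem rescaleConstraint_prod
    (X : Type*) [TopologicalSpace X] [PolishSpace X]
    [MeasurableSpace X] [BorelSpace X]
    (M M' : Measure (X → ℝ≥0∞)) [IsFiniteMeasure M] [IsFiniteMeasure M']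
    (hbdd : ∀ᵐ f ∂M, (⨆ x, f x) ≠ ⊤) (hbdd' : ∀ᵐ f ∂M', (⨆ x, f x) ≠ ⊤)
    (hsup : Measurable fun f : X → ℝ≥0∞ => ⨆ x, f x)
    (hsup₂ : Measurable fun f : X × X → ℝ≥0∞ => ⨆ x, f x)
    (hdag : Measurable (rescaleFun (X := X)))
    (hdag₂ : Measurable (rescaleFun (X := X × X)))
    (hrt : Measurable (rtimesFun (X := X)))
    (hnorm : (∫⁻ f, ⨆ x, f x ∂M) = 1) (hnorm' : (∫⁻ f, ⨆ x, f x ∂M') = 1) :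
    rescaleConstraint ((M.prod M').map rtimesFun) =
      (((rescaleConstraint M).prod (rescaleConstraint M')).map rtimesFun) := by
  set Mw := M.withDensity fun f => ⨆ x, f x with hMw
  set M'w := M'.withDensity fun f => ⨆ x, f x with hM'w
  have hPMw : IsProbabilityMeasure Mw := by
    constructor
    rw [hMw, withDensity_apply _ MeasurableSet.univ, Measure.restrict_univ]
    exact hnorm
  have hPM'w : IsProbabilityMeasure M'w := by
    constructor
    rw [hM'w, withDensity_apply _ MeasurableSet.univ, Measure.restrict_univ]
    exact hnorm'
  -- LHS transformation
  have hcomp : ((fun f : X × X → ℝ≥0∞ => ⨆ x, f x) ∘ rtimesFun) =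
      fun p : (X → ℝ≥0∞) × (X → ℝ≥0∞) => (⨆ x, p.1 x) * ⨆ x, p.2 x := by
    funext p; exact sup_rtimes p.1 p.2
  have hLHS : rescaleConstraint ((M.prod M').map rtimesFun) =
      (Mw.prod M'w).map (rescaleFun ∘ rtimesFun) := by
    rw [rescaleConstraint, withDensity_map_aux _ hrt hsup₂, Measure.map_map hdag₂ hrt,
      hcomp, withDensity_prod_aux M M' hsup hsup]
  have hRHS : (((rescaleConstraint M).prod (rescaleConstraint M')).map rtimesFun) =
      (Mw.prod M'w).map (rtimesFun ∘ Prod.map rescaleFun rescaleFun) := by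
    rw [rescaleConstraint, rescaleConstraint, ← hMw, ← hM'w,
      Measure.map_prod_map _ _ hdag hdag, Measure.map_map hrt (hdag.prodMap hdag)]
  rw [hLHS, hRHS]
  -- a.e. equality
  set A : (X → ℝ≥0∞) → Prop := fun f => (⨆ x, f x) ≠ 0 ∧ (⨆ x, f x) ≠ ⊤ with hA
  have haeA : ∀ (N : Measure (X → ℝ≥0∞)), (∀ᵐ f ∂N, (⨆ x, f x) ≠ ⊤) →
      (∫⁻ f, ⨆ x, f x ∂N) = 1 → ∀ᵐ f ∂(N.withDensity fun f => ⨆ x, f x), A f := by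
    intro N hb _
    have h1 : ∀ᵐ f ∂(N.withDensity fun f => ⨆ x, f x), (⨆ x, f x) ≠ ⊤ :=
      (withDensity_absolutelyContinuous N _).ae_le hb
    have hms : MeasurableSet {f : X → ℝ≥0∞ | (⨆ x, f x) = 0} :=
      hsup (measurableSet_singleton 0)
    have h0 : (N.withDensity fun f => ⨆ x, f x) {f | (⨆ x, f x) = 0} = 0 := by
      rw [withDensity_apply _ hms,
        setLIntegral_congr_fun hms (fun f hf => hf),
        lintegral_zero]
    have h2 : ∀ᵐ f ∂(N.withDensity fun f => ⨆ x, f x), (⨆ x, f x) ≠ 0 :=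
      ae_iff.mpr (by simpa using h0)
    exact h2.and h1
  have hA1 : ∀ᵐ f ∂Mw, A f := haeA M hbdd hnorm
  have hA2 : ∀ᵐ f ∂M'w, A f := haeA M' hbdd' hnorm'
  have hprod1 : ∀ᵐ p ∂(Mw.prod M'w), A p.1 := by
    rw [Filter.eventually_iff, mem_ae_iff]
    have heq : {p : (X → ℝ≥0∞) × (X → ℝ≥0∞) | A p.1}ᶜ = {f | A f}ᶜ ×ˢ univ := by
      ext p; simp [Set.mem_prod]
    rw [heq, Measure.prod_prod, Set.compl_setOf, ae_iff.mp hA1, zero_mul]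
  have hprod2 : ∀ᵐ p ∂(Mw.prod M'w), A p.2 := by
    rw [Filter.eventually_iff, mem_ae_iff]
    have heq : {p : (X → ℝ≥0∞) × (X → ℝ≥0∞) | A p.2}ᶜ = univ ×ˢ {f | A f}ᶜ := by
      ext p; simp [Set.mem_prod]
    rw [heq, Measure.prod_prod, Set.compl_setOf, ae_iff.mp hA2, mul_zero]
  refine Measure.map_congr ?_
  filter_upwards [hprod1, hprod2] with p hp1 hp2
  show rescaleFun (rtimesFun p) = rtimesFun (rescaleFun p.1, rescaleFun p.2)
  exact rescale_rtimes p.1 p.2 hp1.1 hp1.2 hp2.1 hp2.2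
end

section
/- Let ξ: X₁ → X₂ be measurable between Polish spaces and let T_ξ map a bounded nonnegative measurable function f on X₁ to T_ξ(f): y ↦ sup_{x ∈ ξ⁻¹[{y}]} f(x) on X₂ (with sup ∅ = 0). Then for every Borel set B ⊆ X₂ and every f, ‖1_{ξ⁻¹[B]} · f‖ = ‖1_B · T_ξ(f)‖, and consequently for any measure constraint M on X₁, the pushforward M' = (T_ξ)_* M satisfies ∫‖1_B · f'‖ M'(df') = ∫‖1_{ξ⁻¹[B]} · f‖ M(df) for all Borel B ⊆ X₂. -/
open MeasureTheory Set
open scoped ENNReal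

/-- The pushforward map on functions: `T_ξ(f) : y ↦ sup_{x ∈ ξ⁻¹[{y}]} f x`
(with `sup ∅ = 0`). -/
noncomputable def pushFun' {X₁ X₂ : Type*} (ξ : X₁ → X₂) (f : X₁ → ℝ≥0∞) :
    X₂ → ℝ≥0∞ :=
  fun y => ⨆ x ∈ ξ ⁻¹' {y}, f x

/-- For measurable `ξ : X₁ → X₂` between Polish spaces and the
map `T_ξ` above, one has `‖1_{ξ⁻¹[B]} · f‖ = ‖1_B · T_ξ(f)‖` for every `B` and
`f`; consequently the pushforward `M' = (T_ξ)_* M` of a measure constraint `M`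
on `X₁` satisfies `∫ ‖1_B · f'‖ M'(df') = ∫ ‖1_{ξ⁻¹[B]} · f‖ M(df)` for every
Borel `B ⊆ X₂`. -/
theorem pushforward_measure_constraint
    (X₁ X₂ : Type*) [TopologicalSpace X₁] [PolishSpace X₁]
    [MeasurableSpace X₁] [BorelSpace X₁]
    [TopologicalSpace X₂] [PolishSpace X₂]
    [MeasurableSpace X₂] [BorelSpace X₂]
    (ξ : X₁ → X₂) (hξ : Measurable ξ)
    (M : Measure (X₁ → ℝ≥0∞)) [IsFiniteMeasure M]
    (hT : Measurable (pushFun' ξ))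
    (hsupB : ∀ B : Set X₂, MeasurableSet B →
      Measurable fun g : X₂ → ℝ≥0∞ => ⨆ y ∈ B, g y) :
    (∀ (B : Set X₂) (f : X₁ → ℝ≥0∞),
      (⨆ x ∈ ξ ⁻¹' B, f x) = ⨆ y ∈ B, pushFun' ξ f y) ∧
    (∀ B : Set X₂, MeasurableSet B →
      (∫⁻ g, ⨆ y ∈ B, g y ∂(M.map (pushFun' ξ))) =
        ∫⁻ f, ⨆ x ∈ ξ ⁻¹' B, f x ∂M) := by
  have key : ∀ (B : Set X₂) (f : X₁ → ℝ≥0∞),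
      (⨆ x ∈ ξ ⁻¹' B, f x) = ⨆ y ∈ B, pushFun' ξ f y := by
    intro B f
    apply le_antisymm
    · refine iSup₂_le fun x hx => ?_
      refine le_trans ?_ (le_iSup₂ (ξ x) hx)
      exact le_iSup₂ (f := fun x' (_ : x' ∈ ξ ⁻¹' {ξ x}) => f x') x rfl
    · refine iSup₂_le fun y hy => iSup₂_le fun x hx => ?_
      have : ξ x ∈ B := by rwa [hx.out]
      exact le_iSup₂ (f := fun x' (_ : x' ∈ ξ ⁻¹' B) => f x') x this
  refine ⟨key, fun B hB => ?_⟩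
  rw [lintegral_map (hsupB B hB) hT]
  exact lintegral_congr fun f => (key B f).symm
end

section
/- The fusion operation on probabilistic constraints P ⋆ P' = (P * P')† / ‖P * P'‖ is associative: for probabilistic constraints P, P', P'' with all relevant normalizing constants nonzero, (P ⋆ P') ⋆ P'' = P ⋆ (P' ⋆ P''). -/
open MeasureTheory Set
open scoped ENNReal

/-- The weighted semi-norm `‖M‖ = ∫ ‖f‖ M(df)`. -/
noncomputable def constraintNorm {X : Type*} [MeasurableSpace X]
    (M : Measure (X → ℝ≥0∞)) : ℝ≥0∞ :=
  ∫⁻ f, ⨆ x, f x ∂M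

/-- Convolution of measures on the multiplicative semigroup of functions:
`(P * P')(F) = ∫∫ 1_F (f · f') P(df) P'(df')`. -/
noncomputable def convConstraint {X : Type*} [MeasurableSpace X]
    (P P' : Measure (X → ℝ≥0∞)) [SFinite P] [SFinite P'] :
    Measure (X → ℝ≥0∞) :=
  (P.prod P').map fun p => fun x => p.1 x * p.2 x

/-- The fusion operation `P ⋆ P' = (P * P')† / ‖P * P'‖`. -/
noncomputable def fuse {X : Type*} [MeasurableSpace X]
    (P P' : Measure (X → ℝ≥0∞)) [SFinite P] [SFinite P'] :
    Measure (X → ℝ≥0∞) :=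
  (constraintNorm (convConstraint P P'))⁻¹ •
    rescaleConstraint (convConstraint P P')


instance fuse_sfinite {X : Type*} [MeasurableSpace X]
    (P P' : Measure (X → ℝ≥0∞)) [SFinite P] [SFinite P'] :
    SFinite (fuse P P') := by
  unfold fuse rescaleConstraint convConstraint; infer_instance

instance rescaleConstraint_sfinite {X : Type*} [MeasurableSpace X]
    (M : Measure (X → ℝ≥0∞)) [SFinite M] : SFinite (rescaleConstraint M) := by
  unfold rescaleConstraint; infer_instance

instance convConstraint_sfinite {X : Type*} [MeasurableSpace X]
    (P P' : Measure (X → ℝ≥0∞)) [SFinite P] [SFinite P'] :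
    SFinite (convConstraint P P') := by
  unfold convConstraint; infer_instance

section Aux
set_option linter.unusedSectionVars false
variable {X : Type*} [MeasurableSpace X]

lemma sup_mul_le (f g : X → ℝ≥0∞) :
    (⨆ x, f x * g x) ≤ (⨆ x, f x) * ⨆ x, g x :=
  iSup_le fun x => mul_le_mul' (le_iSup f x) (le_iSup g x)

lemma rescaleFun_of_ne (f : X → ℝ≥0∞) (h : (⨆ x, f x) ≠ 0) :
    rescaleFun f = fun x => f x / ⨆ y, f y := by
  rw [rescaleFun, if_neg h]

lemma key_left (f g : X → ℝ≥0∞) (hf : (⨆ x, f x) ≠ ⊤) (φ : (X → ℝ≥0∞) → ℝ≥0∞) :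
    φ (rescaleFun fun x => rescaleFun f x * g x) * (⨆ x, rescaleFun f x * g x) * (⨆ x, f x)
      = φ (rescaleFun fun x => f x * g x) * (⨆ x, f x * g x) := by
  by_cases h0 : (⨆ x, f x) = 0
  · have hfx : ∀ x, f x = 0 := fun x =>
      le_antisymm (h0 ▸ le_iSup f x) zero_le
    have hz : (fun x => f x * g x) = fun _ => (0 : ℝ≥0∞) := funext fun x => by simp [hfx x]
    rw [h0, hz]
    simp
  · have hsf := rescaleFun_of_ne f h0
    set a := ⨆ x, f x with ha
    have h1 : (fun x => rescaleFun f x * g x) = fun x => (f x * g x) / a := by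
      funext x; rw [hsf]
      simp only [div_eq_mul_inv]; ring
    have hsup1 : (⨆ x, (f x * g x) / a) = (⨆ x, f x * g x) / a :=
      (ENNReal.iSup_div _ _).symm
    by_cases hb : (⨆ x, f x * g x) = 0
    · rw [h1, hsup1, hb]
      simp
    · set b := ⨆ x, f x * g x with hbdef
      have hba : b / a ≠ 0 := by
        simp only [ne_eq, ENNReal.div_eq_zero_iff, not_or]
        exact ⟨hb, hf⟩
      rw [h1, rescaleFun_of_ne _ (by rw [hsup1]; exact hba), rescaleFun_of_ne _ hb]
      simp only [hsup1]
      have hdiv : ∀ c : ℝ≥0∞, c / a / (b / a) = c / b := by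
        intro c
        rw [div_eq_mul_inv, div_eq_mul_inv, div_eq_mul_inv,
          ENNReal.mul_inv (Or.inl hb) (Or.inr (ENNReal.inv_ne_zero.mpr hf)),
          inv_inv,
          show c * a⁻¹ * (b⁻¹ * a) = c * b⁻¹ * (a⁻¹ * a) by ring,
          ENNReal.inv_mul_cancel h0 hf, mul_one, div_eq_mul_inv]
      have h2 : (fun x => (f x * g x) / a / (b / a)) = fun x => (f x * g x) / b :=
        funext fun x => hdiv _
      rw [h2, mul_assoc, ENNReal.div_mul_cancel h0 hf]

lemma key_right (f g : X → ℝ≥0∞) (hg : (⨆ x, g x) ≠ ⊤) (φ : (X → ℝ≥0∞) → ℝ≥0∞) :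
    φ (rescaleFun fun x => f x * rescaleFun g x) * (⨆ x, f x * rescaleFun g x) * (⨆ x, g x)
      = φ (rescaleFun fun x => f x * g x) * (⨆ x, f x * g x) := by
  have h := key_left g f hg φ
  have e1 : (fun x => rescaleFun g x * f x) = fun x => f x * rescaleFun g x :=
    funext fun x => mul_comm _ _
  have e2 : (fun x => g x * f x) = fun x => f x * g x :=
    funext fun x => mul_comm _ _
  rw [e1, e2] at h
  exact h

variable (hsup : Measurable fun f : X → ℝ≥0∞ => ⨆ x, f x)
    (hdag : Measurable (rescaleFun (X := X)))
    (hmul : Measurable fun p : (X → ℝ≥0∞) × (X → ℝ≥0∞) =>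
      (fun x => p.1 x * p.2 x : X → ℝ≥0∞))

include hsup hdag in
lemma lintegral_rescale (M : Measure (X → ℝ≥0∞))
    {φ : (X → ℝ≥0∞) → ℝ≥0∞} (hφ : Measurable φ) :
    ∫⁻ h, φ h ∂rescaleConstraint M = ∫⁻ f, φ (rescaleFun f) * (⨆ x, f x) ∂M := by
  have hcomp : Measurable fun f : X → ℝ≥0∞ => φ (rescaleFun f) := hφ.comp hdag
  rw [rescaleConstraint, lintegral_map hφ hdag,
    lintegral_withDensity_eq_lintegral_mul _ hsup hcomp]
  exact lintegral_congr fun f => mul_comm _ _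

include hmul in
lemma lintegral_conv (P P' : Measure (X → ℝ≥0∞)) [SFinite P] [SFinite P']
    {φ : (X → ℝ≥0∞) → ℝ≥0∞} (hφ : Measurable φ) :
    ∫⁻ h, φ h ∂convConstraint P P'
      = ∫⁻ f, ∫⁻ g, φ (fun x => f x * g x) ∂P' ∂P := by
  have haem : AEMeasurable (fun z : (X → ℝ≥0∞) × (X → ℝ≥0∞) => φ fun x => z.1 x * z.2 x)
      (P.prod P') := (hφ.comp hmul).aemeasurable
  rw [convConstraint, lintegral_map hφ hmul, lintegral_prod _ haem]

include hsup hmul in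
lemma ae_conv_ne_top (P P' : Measure (X → ℝ≥0∞)) [SFinite P] [SFinite P']
    (hP : ∀ᵐ f ∂P, (⨆ x, f x) ≠ ⊤) (hP' : ∀ᵐ f ∂P', (⨆ x, f x) ≠ ⊤) :
    ∀ᵐ h ∂convConstraint P P', (⨆ x, h x) ≠ ⊤ := by
  have hset : MeasurableSet {h : X → ℝ≥0∞ | (⨆ x, h x) ≠ ⊤} :=
    (hsup (measurableSet_singleton ⊤)).compl
  rw [convConstraint, ae_map_iff hmul.aemeasurable hset]
  have h1 : (P.prod P') ({f : X → ℝ≥0∞ | (⨆ x, f x) = ⊤} ×ˢ univ) = 0 := by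
    rw [Measure.prod_prod]
    have hz : P {f : X → ℝ≥0∞ | (⨆ x, f x) = ⊤} = 0 := by
      simpa [ae_iff] using hP
    simp [hz]
  have h2 : (P.prod P') ((univ : Set (X → ℝ≥0∞)) ×ˢ {g : X → ℝ≥0∞ | (⨆ x, g x) = ⊤}) = 0 := by
    rw [Measure.prod_prod]
    have hz : P' {g : X → ℝ≥0∞ | (⨆ x, g x) = ⊤} = 0 := by
      simpa [ae_iff] using hP'
    simp [hz]
  rw [ae_iff]
  refine measure_mono_null (fun p hp => ?_) (measure_union_null h1 h2)
  simp only [mem_setOf_eq, not_not] at hp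
  have hle := sup_mul_le p.1 p.2
  rw [hp] at hle
  rcases ENNReal.mul_eq_top.mp (top_le_iff.mp hle) with ⟨_, h⟩ | ⟨h, _⟩
  · exact Or.inr ⟨mem_univ _, h⟩
  · exact Or.inl ⟨h, mem_univ _⟩

include hsup hmul in
lemma norm_conv_le (P P' : Measure (X → ℝ≥0∞)) [SFinite P] [SFinite P'] :
    constraintNorm (convConstraint P P') ≤ constraintNorm P * constraintNorm P' := by
  rw [constraintNorm, lintegral_conv hmul P P' hsup]
  calc ∫⁻ f, ∫⁻ g, ⨆ x, f x * g x ∂P' ∂P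
      ≤ ∫⁻ f, ∫⁻ g, (⨆ x, f x) * ⨆ x, g x ∂P' ∂P :=
        lintegral_mono fun f => lintegral_mono fun g => sup_mul_le f g
    _ = ∫⁻ f, (⨆ x, f x) * constraintNorm P' ∂P := by
        refine lintegral_congr fun f => ?_
        rw [lintegral_const_mul _ hsup]; rfl
    _ = constraintNorm P * constraintNorm P' := lintegral_mul_const _ hsup

include hsup hdag hmul in
lemma absorb_left (M B : Measure (X → ℝ≥0∞)) [SFinite M] [SFinite B]
    (hb : ∀ᵐ f ∂M, (⨆ x, f x) ≠ ⊤)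
    {φ : (X → ℝ≥0∞) → ℝ≥0∞} (hφ : Measurable φ) :
    ∫⁻ h, φ (rescaleFun h) * (⨆ x, h x) ∂convConstraint (rescaleConstraint M) B
      = ∫⁻ h, φ (rescaleFun h) * (⨆ x, h x) ∂convConstraint M B := by
  have hΦ : Measurable fun h : X → ℝ≥0∞ => φ (rescaleFun h) * ⨆ x, h x :=
    (hφ.comp hdag).mul hsup
  have hΦm : Measurable fun p : (X → ℝ≥0∞) × (X → ℝ≥0∞) =>
      φ (rescaleFun fun x => p.1 x * p.2 x) * ⨆ x, p.1 x * p.2 x := hΦ.comp hmul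
  rw [lintegral_conv hmul _ _ hΦ, lintegral_conv hmul _ _ hΦ,
      lintegral_rescale hsup hdag _ hΦm.lintegral_prod_right']
  refine lintegral_congr_ae ?_
  filter_upwards [hb] with f hf
  have hinner : Measurable fun g : X → ℝ≥0∞ =>
      φ (rescaleFun fun x => rescaleFun f x * g x) * ⨆ x, rescaleFun f x * g x :=
    hΦ.comp (hmul.comp measurable_prodMk_left)
  rw [← lintegral_mul_const _ hinner]
  exact lintegral_congr fun g => key_left f g hf φ

include hsup hdag hmul in
lemma absorb_right (A M : Measure (X → ℝ≥0∞)) [SFinite A] [SFinite M]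
    (hb : ∀ᵐ g ∂M, (⨆ x, g x) ≠ ⊤)
    {φ : (X → ℝ≥0∞) → ℝ≥0∞} (hφ : Measurable φ) :
    ∫⁻ h, φ (rescaleFun h) * (⨆ x, h x) ∂convConstraint A (rescaleConstraint M)
      = ∫⁻ h, φ (rescaleFun h) * (⨆ x, h x) ∂convConstraint A M := by
  have hΦ : Measurable fun h : X → ℝ≥0∞ => φ (rescaleFun h) * ⨆ x, h x :=
    (hφ.comp hdag).mul hsup
  rw [lintegral_conv hmul _ _ hΦ, lintegral_conv hmul _ _ hΦ]
  refine lintegral_congr fun f => ?_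
  have hinner : Measurable fun g : X → ℝ≥0∞ =>
      φ (rescaleFun fun x => f x * g x) * ⨆ x, f x * g x :=
    hΦ.comp (hmul.comp measurable_prodMk_left)
  rw [lintegral_rescale hsup hdag M hinner]
  refine lintegral_congr_ae ?_
  filter_upwards [hb] with g hg
  exact key_right f g hg φ

include hmul in
lemma lintegral_conv_assoc (P P' P'' : Measure (X → ℝ≥0∞))
    [SFinite P] [SFinite P'] [SFinite P'']
    {φ : (X → ℝ≥0∞) → ℝ≥0∞} (hφ : Measurable φ) :
    ∫⁻ h, φ h ∂convConstraint (convConstraint P P') P''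
      = ∫⁻ h, φ h ∂convConstraint P (convConstraint P' P'') := by
  have hψ : Measurable fun u : X → ℝ≥0∞ => ∫⁻ h, φ (fun x => u x * h x) ∂P'' :=
    (hφ.comp hmul).lintegral_prod_right'
  have hL : ∫⁻ h, φ h ∂convConstraint (convConstraint P P') P''
      = ∫⁻ f, ∫⁻ g, ∫⁻ h, φ (fun x => f x * g x * h x) ∂P'' ∂P' ∂P := by
    rw [lintegral_conv hmul _ _ hφ, lintegral_conv hmul _ _ hψ]
  have hR : ∫⁻ h, φ h ∂convConstraint P (convConstraint P' P'')
      = ∫⁻ f, ∫⁻ g, ∫⁻ h, φ (fun x => f x * (g x * h x)) ∂P'' ∂P' ∂P := by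
    rw [lintegral_conv hmul _ _ hφ]
    refine lintegral_congr fun f => ?_
    exact lintegral_conv hmul _ _ (hφ.comp (hmul.comp measurable_prodMk_left))
  rw [hL, hR]
  refine lintegral_congr fun f => lintegral_congr fun g => lintegral_congr fun h => ?_
  congr 1
  funext x
  exact mul_assoc _ _ _

end Aux


section Main
set_option linter.unusedSectionVars false
variable {X : Type*} [MeasurableSpace X]
    (hsup : Measurable fun f : X → ℝ≥0∞ => ⨆ x, f x)
    (hdag : Measurable (rescaleFun (X := X)))
    (hmul : Measurable fun p : (X → ℝ≥0∞) × (X → ℝ≥0∞) =>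
      (fun x => p.1 x * p.2 x : X → ℝ≥0∞))

lemma scal_cancel (c N J : ℝ≥0∞) (hc0 : c ≠ 0) (hcT : c ≠ ⊤) :
    (c⁻¹ * N)⁻¹ * (c⁻¹ * J) = N⁻¹ * J := by
  rw [ENNReal.mul_inv (Or.inl (ENNReal.inv_ne_zero.mpr hcT))
      (Or.inl (ENNReal.inv_ne_top.mpr hc0)), inv_inv,
    mul_mul_mul_comm, ENNReal.mul_inv_cancel hc0 hcT, one_mul]

include hsup hdag hmul in
lemma fuse_conv_left (P P' B : Measure (X → ℝ≥0∞))
    [SFinite P] [SFinite P'] [SFinite B]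
    (hbP : ∀ᵐ f ∂P, (⨆ x, f x) ≠ ⊤) (hbP' : ∀ᵐ f ∂P', (⨆ x, f x) ≠ ⊤)
    {φ : (X → ℝ≥0∞) → ℝ≥0∞} (hφ : Measurable φ) :
    ∫⁻ h, φ (rescaleFun h) * (⨆ x, h x) ∂convConstraint (fuse P P') B
      = (constraintNorm (convConstraint P P'))⁻¹ *
        ∫⁻ h, φ (rescaleFun h) * (⨆ x, h x) ∂convConstraint (convConstraint P P') B := by
  have hΦ : Measurable fun h : X → ℝ≥0∞ => φ (rescaleFun h) * ⨆ x, h x :=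
    (hφ.comp hdag).mul hsup
  rw [lintegral_conv hmul _ _ hΦ]
  simp only [fuse]
  rw [lintegral_smul_measure, ← lintegral_conv hmul _ _ hΦ,
    absorb_left hsup hdag hmul _ B (ae_conv_ne_top hsup hmul P P' hbP hbP') hφ, smul_eq_mul]

include hsup hdag hmul in
lemma fuse_conv_right (A P P' : Measure (X → ℝ≥0∞))
    [SFinite A] [SFinite P] [SFinite P']
    (hbP : ∀ᵐ f ∂P, (⨆ x, f x) ≠ ⊤) (hbP' : ∀ᵐ f ∂P', (⨆ x, f x) ≠ ⊤)
    {φ : (X → ℝ≥0∞) → ℝ≥0∞} (hφ : Measurable φ) :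
    ∫⁻ h, φ (rescaleFun h) * (⨆ x, h x) ∂convConstraint A (fuse P P')
      = (constraintNorm (convConstraint P P'))⁻¹ *
        ∫⁻ h, φ (rescaleFun h) * (⨆ x, h x) ∂convConstraint A (convConstraint P P') := by
  have hΦ : Measurable fun h : X → ℝ≥0∞ => φ (rescaleFun h) * ⨆ x, h x :=
    (hφ.comp hdag).mul hsup
  rw [lintegral_conv hmul _ _ hΦ]
  simp only [fuse]
  have hinner : Measurable fun f : X → ℝ≥0∞ =>
      ∫⁻ g, (φ (rescaleFun fun x => f x * g x) * ⨆ x, f x * g x)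
        ∂rescaleConstraint (convConstraint P P') :=
    (hΦ.comp hmul).lintegral_prod_right'
  calc ∫⁻ f, ∫⁻ g, (φ (rescaleFun fun x => f x * g x) * ⨆ x, f x * g x)
        ∂((constraintNorm (convConstraint P P'))⁻¹ •
          rescaleConstraint (convConstraint P P')) ∂A
      = ∫⁻ f, (constraintNorm (convConstraint P P'))⁻¹ *
          ∫⁻ g, (φ (rescaleFun fun x => f x * g x) * ⨆ x, f x * g x)
            ∂rescaleConstraint (convConstraint P P') ∂A := by
        refine lintegral_congr fun f => ?_
        rw [lintegral_smul_measure, smul_eq_mul]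
    _ = (constraintNorm (convConstraint P P'))⁻¹ *
          ∫⁻ h, φ (rescaleFun h) * (⨆ x, h x)
            ∂convConstraint A (rescaleConstraint (convConstraint P P')) := by
        rw [lintegral_const_mul _ hinner, lintegral_conv hmul _ _ hΦ]
    _ = (constraintNorm (convConstraint P P'))⁻¹ *
          ∫⁻ h, φ (rescaleFun h) * (⨆ x, h x) ∂convConstraint A (convConstraint P P') := by
        rw [absorb_right hsup hdag hmul A _ (ae_conv_ne_top hsup hmul P P' hbP hbP') hφ]

include hsup hdag in
lemma rescale_apply (M : Measure (X → ℝ≥0∞)) {s : Set (X → ℝ≥0∞)}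
    (hs : MeasurableSet s) :
    rescaleConstraint M s
      = ∫⁻ f, s.indicator 1 (rescaleFun f) * (⨆ x, f x) ∂M := by
  rw [← lintegral_indicator_one hs,
    lintegral_rescale hsup hdag M (measurable_one.indicator hs)]

end Main


/-- The fusion operation `⋆` on probabilistic constraints is
associative: for probabilistic constraints `P, P', P''` with nonzero
normalizing constants, `(P ⋆ P') ⋆ P'' = P ⋆ (P' ⋆ P'')`. -/
theorem fuse_assoc
    (X : Type*) [TopologicalSpace X] [PolishSpace X]
    [MeasurableSpace X] [BorelSpace X]
    (P P' P'' : Measure (X → ℝ≥0∞))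
    [IsFiniteMeasure P] [IsFiniteMeasure P'] [IsFiniteMeasure P'']
    (hsup : Measurable fun f : X → ℝ≥0∞ => ⨆ x, f x)
    (hdag : Measurable (rescaleFun (X := X)))
    (hmul : Measurable fun p : (X → ℝ≥0∞) × (X → ℝ≥0∞) =>
      (fun x => p.1 x * p.2 x : X → ℝ≥0∞))
    (hbP : ∀ᵐ f ∂P, (⨆ x, f x) ≠ ⊤)
    (hbP' : ∀ᵐ f ∂P', (⨆ x, f x) ≠ ⊤)
    (hbP'' : ∀ᵐ f ∂P'', (⨆ x, f x) ≠ ⊤)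
    (hP : constraintNorm P = 1) (hP' : constraintNorm P' = 1)
    (hP'' : constraintNorm P'' = 1)
    (h12 : constraintNorm (convConstraint P P') ≠ 0)
    (h23 : constraintNorm (convConstraint P' P'') ≠ 0)
    (h12_3 : constraintNorm (convConstraint (fuse P P') P'') ≠ 0)
    (h1_23 : constraintNorm (convConstraint P (fuse P' P'')) ≠ 0) :
    fuse (fuse P P') P'' = fuse P (fuse P' P'') := by
  have hc12T : constraintNorm (convConstraint P P') ≠ ⊤ := by
    have h := norm_conv_le hsup hmul P P'
    rw [hP, hP', one_mul] at h
    exact ne_top_of_le_ne_top ENNReal.one_ne_top h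
  have hc23T : constraintNorm (convConstraint P' P'') ≠ ⊤ := by
    have h := norm_conv_le hsup hmul P' P''
    rw [hP', hP'', one_mul] at h
    exact ne_top_of_le_ne_top ENNReal.one_ne_top h
  ext s hs
  have hφs : Measurable (s.indicator (1 : (X → ℝ≥0∞) → ℝ≥0∞)) :=
    measurable_one.indicator hs
  have hΦs : Measurable fun h : X → ℝ≥0∞ =>
      s.indicator 1 (rescaleFun h) * ⨆ x, h x := (hφs.comp hdag).mul hsup
  have hone : Measurable fun _ : X → ℝ≥0∞ => (1 : ℝ≥0∞) := measurable_const
  -- Left side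
  have hn12 : constraintNorm (convConstraint (fuse P P') P'')
      = (constraintNorm (convConstraint P P'))⁻¹ *
        constraintNorm (convConstraint (convConstraint P P') P'') := by
    have h := fuse_conv_left hsup hdag hmul P P' P'' hbP hbP' hone
    simpa [constraintNorm, one_mul] using h
  have hi12 : ∫⁻ h, s.indicator 1 (rescaleFun h) * (⨆ x, h x)
        ∂convConstraint (fuse P P') P''
      = (constraintNorm (convConstraint P P'))⁻¹ *
        ∫⁻ h, s.indicator 1 (rescaleFun h) * (⨆ x, h x)
          ∂convConstraint (convConstraint P P') P'' :=
    fuse_conv_left hsup hdag hmul P P' P'' hbP hbP' hφs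
  have eL : fuse (fuse P P') P'' s
      = (constraintNorm (convConstraint (convConstraint P P') P''))⁻¹ *
        ∫⁻ h, s.indicator 1 (rescaleFun h) * (⨆ x, h x)
          ∂convConstraint (convConstraint P P') P'' := by
    rw [show fuse (fuse P P') P''
        = (constraintNorm (convConstraint (fuse P P') P''))⁻¹ •
          rescaleConstraint (convConstraint (fuse P P') P'') from rfl,
      Measure.smul_apply, smul_eq_mul, rescale_apply hsup hdag _ hs, hn12, hi12,
      scal_cancel _ _ _ h12 hc12T]
  -- Right side
  have hn23 : constraintNorm (convConstraint P (fuse P' P''))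
      = (constraintNorm (convConstraint P' P''))⁻¹ *
        constraintNorm (convConstraint P (convConstraint P' P'')) := by
    have h := fuse_conv_right hsup hdag hmul P P' P'' hbP' hbP'' hone
    simpa [constraintNorm, one_mul] using h
  have hi23 : ∫⁻ h, s.indicator 1 (rescaleFun h) * (⨆ x, h x)
        ∂convConstraint P (fuse P' P'')
      = (constraintNorm (convConstraint P' P''))⁻¹ *
        ∫⁻ h, s.indicator 1 (rescaleFun h) * (⨆ x, h x)
          ∂convConstraint P (convConstraint P' P'') :=
    fuse_conv_right hsup hdag hmul P P' P'' hbP' hbP'' hφs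
  have eR : fuse P (fuse P' P'') s
      = (constraintNorm (convConstraint P (convConstraint P' P'')))⁻¹ *
        ∫⁻ h, s.indicator 1 (rescaleFun h) * (⨆ x, h x)
          ∂convConstraint P (convConstraint P' P'') := by
    rw [show fuse P (fuse P' P'')
        = (constraintNorm (convConstraint P (fuse P' P'')))⁻¹ •
          rescaleConstraint (convConstraint P (fuse P' P'')) from rfl,
      Measure.smul_apply, smul_eq_mul, rescale_apply hsup hdag _ hs, hn23, hi23,
      scal_cancel _ _ _ h23 hc23T]
  rw [eL, eR]
  congr 1
  · congr 1
    exact lintegral_conv_assoc hmul P P' P'' hsup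
  · exact lintegral_conv_assoc hmul P P' P'' hΦs
end

section
/- Fusion of finitely supported indicator-type probabilistic constraints recovers Dempster's rule of combination: if P = Σ_{A∈𝒜} m(A) δ_{1_A} and P' = Σ_{A'∈𝒜'} m'(A') δ_{1_{A'}} with Σ m(A) = Σ m'(A') = 1 and Σ_{A∩A'≠∅} m(A)m'(A') ≠ 0, then P ⋆ P' = (1/K) Σ_{A∩A'≠∅} m(A) m'(A') δ_{1_{A∩A'}} where K = 1 − Σ_{A∩A'=∅} m(A)m'(A'). -/
open MeasureTheory Set
open scoped ENNReal

open scoped Classical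


instance finsum_sfinite {X ι : Type*} [MeasurableSpace X] [Fintype ι]
    (μ : ι → Measure X) [∀ i, SFinite (μ i)] : SFinite (∑ i, μ i) := by
  rw [← Measure.sum_fintype]; infer_instance

/-! Each operation entering `fuse` sends finite mixtures of Dirac masses to finite mixtures of
Dirac masses: the convolution multiplies the atoms pairwise, rescaling moves an atom `f` to `f†`
and multiplies its weight by `‖f‖`, and the norm is the weighted sum of the `‖f‖`. For indicator
atoms `1_A · 1_{A'} = 1_{A ∩ A'}`, whose norm is `1` or `0` according as `A ∩ A'` is nonempty, so
the conflicting pairs drop out, and since the masses multiply to a total of one, the remaining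
weight is `K`. -/

section DiracMixture

variable {α β : Type*} [MeasurableSpace α] [MeasurableSpace β] {κ κ' : Type*} [Fintype κ]
  [Fintype κ']

theorem Measure.map_sum_smul_dirac {f : α → β} (hf : Measurable f) (c : κ → ℝ≥0∞) (a : κ → α) :
    (∑ k, c k • Measure.dirac (a k)).map f = ∑ k, c k • Measure.dirac (f (a k)) := by
  rw [← Measure.sum_fintype, Measure.map_sum hf.aemeasurable, Measure.sum_fintype]
  simp only [Measure.map_smul, Measure.map_dirac' hf]

theorem withDensity_sum_smul_dirac {g : α → ℝ≥0∞} (hg : Measurable g) (c : κ → ℝ≥0∞)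
    (a : κ → α) :
    (∑ k, c k • Measure.dirac (a k)).withDensity g = ∑ k, (c k * g (a k)) • Measure.dirac (a k) := by
  rw [← Measure.sum_fintype, withDensity_sum, Measure.sum_fintype]
  simp only [withDensity_smul_measure, dirac_withDensity' hg, smul_smul]

theorem lintegral_sum_smul_dirac {g : α → ℝ≥0∞} (hg : Measurable g) (c : κ → ℝ≥0∞)
    (a : κ → α) : ∫⁻ x, g x ∂(∑ k, c k • Measure.dirac (a k)) = ∑ k, c k * g (a k) := by
  simp only [lintegral_finsetSum_measure, lintegral_smul_measure, lintegral_dirac' _ hg,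
    smul_eq_mul]

theorem Measure.sum_smul_dirac_prod_sum_smul_dirac (c : κ → ℝ≥0∞) (a : κ → α)
    (c' : κ' → ℝ≥0∞) (b : κ' → β) :
    (∑ i, c i • Measure.dirac (a i)).prod (∑ j, c' j • Measure.dirac (b j)) =
      ∑ p : κ × κ', (c p.1 * c' p.2) • Measure.dirac (a p.1, b p.2) := by
  rw [← Measure.sum_fintype, ← Measure.sum_fintype, Measure.prod_sum, Measure.sum_fintype]
  simp only [Measure.prod_smul_left, Measure.prod_smul_right, Measure.dirac_prod_dirac, smul_smul,
    mul_comm]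

end DiracMixture

section Constraint

variable {X : Type*} {κ κ' : Type*} [Fintype κ] [Fintype κ']

theorem measurable_rescaleFun (hsup : Measurable fun g : X → ℝ≥0∞ => ⨆ x, g x) :
    Measurable (rescaleFun (X := X)) :=
  Measurable.ite (hsup (measurableSet_singleton 0)) measurable_const
    (measurable_pi_lambda _ fun x => (measurable_pi_apply x).div hsup)

variable [MeasurableSpace X]

theorem convConstraint_sum_smul_dirac (c : κ → ℝ≥0∞) (a : κ → X → ℝ≥0∞) (c' : κ' → ℝ≥0∞)
    (b : κ' → X → ℝ≥0∞) :
    convConstraint (∑ i, c i • Measure.dirac (a i)) (∑ j, c' j • Measure.dirac (b j)) =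
      ∑ p : κ × κ', (c p.1 * c' p.2) • Measure.dirac (a p.1 * b p.2) := by
  rw [convConstraint, Measure.sum_smul_dirac_prod_sum_smul_dirac]
  exact Measure.map_sum_smul_dirac measurable_mul _ _

theorem constraintNorm_sum_smul_dirac (hsup : Measurable fun g : X → ℝ≥0∞ => ⨆ x, g x)
    (c : κ → ℝ≥0∞) (g : κ → X → ℝ≥0∞) :
    constraintNorm (∑ k, c k • Measure.dirac (g k)) = ∑ k, c k * ⨆ x, g k x :=
  lintegral_sum_smul_dirac hsup c g

theorem rescaleConstraint_sum_smul_dirac (hsup : Measurable fun g : X → ℝ≥0∞ => ⨆ x, g x)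
    (c : κ → ℝ≥0∞) (g : κ → X → ℝ≥0∞) :
    rescaleConstraint (∑ k, c k • Measure.dirac (g k)) =
      ∑ k, (c k * ⨆ x, g k x) • Measure.dirac (rescaleFun (g k)) := by
  rw [rescaleConstraint, withDensity_sum_smul_dirac hsup,
    Measure.map_sum_smul_dirac (measurable_rescaleFun hsup)]

end Constraint

section Indicator

variable {X : Type*}

theorem iSup_indicator_one (S : Set X) :
    (⨆ x, S.indicator (fun _ => (1 : ℝ≥0∞)) x) = if S.Nonempty then 1 else 0 := by
  split_ifs with hS
  · obtain ⟨x₀, hx₀⟩ := hS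
    refine le_antisymm (iSup_le fun x => Set.indicator_le_self' (by simp) x) ?_
    exact le_iSup_of_le x₀ (by simp [hx₀])
  · simp [Set.not_nonempty_iff_eq_empty.mp hS]

theorem indicator_one_mul_indicator_one (S T : Set X) :
    (S.indicator fun _ => (1 : ℝ≥0∞)) * T.indicator (fun _ => 1) =
      (S ∩ T).indicator fun _ => 1 :=
  Set.inter_indicator_one.symm

theorem rescaleFun_indicator_one {S : Set X} (hS : S.Nonempty) :
    rescaleFun (S.indicator fun _ => (1 : ℝ≥0∞)) = S.indicator fun _ => 1 := by
  simp [rescaleFun, iSup_indicator_one, hS]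

theorem smul_dirac_rescaleFun_indicator_one (c : ℝ≥0∞) (S : Set X) :
    (c * ⨆ x, S.indicator (fun _ => (1 : ℝ≥0∞)) x) •
        Measure.dirac (rescaleFun (S.indicator fun _ => (1 : ℝ≥0∞))) =
      if S.Nonempty then c • Measure.dirac (S.indicator fun _ => (1 : ℝ≥0∞)) else 0 := by
  split_ifs with hS
  · rw [iSup_indicator_one, if_pos hS, mul_one, rescaleFun_indicator_one hS]
  · rw [iSup_indicator_one, if_neg hS, mul_zero, zero_smul]

end Indicator

theorem ENNReal.sum_ite_eq_one_sub {κ : Type*} [Fintype κ] (p : κ → Prop) [DecidablePred p]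
    (w : κ → ℝ≥0∞) (hw : ∑ k, w k = 1) :
    ∑ k, (if p k then w k else 0) = 1 - ∑ k, if p k then 0 else w k := by
  have hsplit : (∑ k, if p k then w k else 0) + ∑ k, (if p k then 0 else w k) = 1 := by
    rw [← Finset.sum_add_distrib, ← hw]
    exact Finset.sum_congr rfl fun k _ => by split_ifs <;> simp
  refine ENNReal.eq_sub_of_add_eq (ne_top_of_le_ne_top ENNReal.one_ne_top ?_) hsplit
  exact hsplit ▸ le_add_self

theorem fuse_dempster_rule_general
    (X : Type*)
    [MeasurableSpace X]
    (ι ι' : Type*) [Fintype ι] [Fintype ι']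
    (A : ι → Set X) (A' : ι' → Set X)
    (m : ι → ℝ≥0∞) (m' : ι' → ℝ≥0∞)
    (hm : (∑ i, m i) = 1) (hm' : (∑ j, m' j) = 1)
    (hsup : Measurable fun g : X → ℝ≥0∞ => ⨆ x, g x) :
    fuse
        (∑ i, m i • Measure.dirac ((A i).indicator fun _ => (1 : ℝ≥0∞)))
        (∑ j, m' j • Measure.dirac ((A' j).indicator fun _ => (1 : ℝ≥0∞))) =
      (1 - ∑ i, ∑ j, if A i ∩ A' j = ∅ then m i * m' j else 0)⁻¹ •
        ∑ i, ∑ j,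
          if (A i ∩ A' j).Nonempty then
            (m i * m' j) •
              Measure.dirac ((A i ∩ A' j).indicator fun _ => (1 : ℝ≥0∞))
          else 0 := by
  have hK : (1 - ∑ i, ∑ j, if A i ∩ A' j = ∅ then m i * m' j else 0) =
      ∑ i, ∑ j, if (A i ∩ A' j).Nonempty then m i * m' j else 0 := by
    have hmass : ∑ p : ι × ι', m p.1 * m' p.2 = 1 := by
      rw [Fintype.sum_prod_type, ← Finset.sum_mul_sum, hm, hm', one_mul]
    have hsplit :=
      ENNReal.sum_ite_eq_one_sub (fun p : ι × ι' => (A p.1 ∩ A' p.2).Nonempty) _ hmass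
    simp only [Fintype.sum_prod_type] at hsplit
    simp only [← Set.not_nonempty_iff_eq_empty, ite_not]
    exact hsplit.symm
  rw [fuse, convConstraint_sum_smul_dirac, constraintNorm_sum_smul_dirac hsup,
    rescaleConstraint_sum_smul_dirac hsup, hK]
  simp only [indicator_one_mul_indicator_one, smul_dirac_rescaleFun_indicator_one]
  simp only [iSup_indicator_one, mul_ite, mul_one, mul_zero, Fintype.sum_prod_type]

/-- Fusion of finitely supported indicator-type probabilistic
constraints recovers Dempster's rule of combination: for
`P = Σ_{A ∈ 𝒜} m(A) δ_{1_A}` and `P' = Σ_{A' ∈ 𝒜'} m'(A') δ_{1_{A'}}` with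
masses summing to one and non-contradictory evidence, `P ⋆ P'` is the
normalised sum of `m(A) m'(A') δ_{1_{A ∩ A'}}` over intersecting pairs, with
normalisation `K = 1 − Σ_{A ∩ A' = ∅} m(A) m'(A')`. -/
theorem fuse_dempster_rule
    (X : Type*) [TopologicalSpace X] [PolishSpace X]
    [MeasurableSpace X] [BorelSpace X]
    (ι ι' : Type*) [Fintype ι] [Fintype ι']
    (A : ι → Set X) (A' : ι' → Set X)
    (hA : ∀ i, MeasurableSet (A i)) (hA' : ∀ j, MeasurableSet (A' j))
    (hAne : ∀ i, (A i).Nonempty) (hA'ne : ∀ j, (A' j).Nonempty)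
    (m : ι → ℝ≥0∞) (m' : ι' → ℝ≥0∞)
    (hm : (∑ i, m i) = 1) (hm' : (∑ j, m' j) = 1)
    (hsup : Measurable fun g : X → ℝ≥0∞ => ⨆ x, g x)
    (hdag : Measurable (rescaleFun (X := X)))
    (hmul : Measurable fun p : (X → ℝ≥0∞) × (X → ℝ≥0∞) =>
      (fun x => p.1 x * p.2 x : X → ℝ≥0∞))
    (hne : (∑ i, ∑ j,
      if (A i ∩ A' j).Nonempty then m i * m' j else 0) ≠ 0) :
    fuse
        (∑ i, m i • Measure.dirac ((A i).indicator fun _ => (1 : ℝ≥0∞)))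
        (∑ j, m' j • Measure.dirac ((A' j).indicator fun _ => (1 : ℝ≥0∞))) =
      (1 - ∑ i, ∑ j, if A i ∩ A' j = ∅ then m i * m' j else 0)⁻¹ •
        ∑ i, ∑ j,
          if (A i ∩ A' j).Nonempty then
            (m i * m' j) •
              Measure.dirac ((A i ∩ A' j).indicator fun _ => (1 : ℝ≥0∞))
          else 0 :=
  fuse_dempster_rule_general X ι ι' A A' m m' hm hm' hsup
end

section
/- Let Y be a set, S ⊆ Y×Y, θ: S → Y, and ℓ: Y×Y → [0,1] with ℓ = 0 off S. Define the binary operation ⊙ on bounded nonnegative functions on Y by (f ⊙ f')(ŷ) = sup_{(y,y') ∈ θ⁻¹[{ŷ}]} ℓ(y,y') f(y) f'(y'). If θ is associative (θ(θ(y,y'),y'') = θ(y,θ(y',y'')) including the extended convention on the added isolated point) and ℓ(y,y')·ℓ(θ(y,y'),y'') = ℓ(y,θ(y',y''))·ℓ(y',y'') for all y,y',y'' ∈ Y, then ⊙ is associative: (f ⊙ f') ⊙ f'' = f ⊙ (f' ⊙ f'') for all bounded nonnegative f, f', f''. -/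
open scoped ENNReal

/-- Extension of the partial combination map `θ : S → Y` (encoded as
`θ : Y → Y → Option Y`, with `none` playing the role of the isolated point `φ`
and of "undefined") to the extended space `Y ∪ {φ}`. -/
def extTheta {Y : Type*} (θ : Y → Y → Option Y) :
    Option Y → Option Y → Option Y
  | some y, some y' => θ y y'
  | _, _ => none

/-- Extension of the potential `ℓ` by zero whenever an argument is `φ`. -/
def extEll {Y : Type*} (ℓ : Y → Y → ℝ≥0∞) : Option Y → Option Y → ℝ≥0∞
  | some y, some y' => ℓ y y'
  | _, _ => 0

/-- The binary operation `⊙` on bounded nonnegative functions on `Y`: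
`(f ⊙ f')(ŷ) = sup_{(y,y') : θ(y,y') = ŷ} ℓ(y,y') f(y) f'(y')`
(with `sup ∅ = 0`). -/
noncomputable def odot {Y : Type*} (θ : Y → Y → Option Y)
    (ℓ : Y → Y → ℝ≥0∞) (f f' : Y → ℝ≥0∞) : Y → ℝ≥0∞ :=
  fun yhat => ⨆ (y : Y) (y' : Y) (_ : θ y y' = some yhat),
    ℓ y y' * f y * f' y'

/-
Multiplication in `ℝ≥0∞` distributes over arbitrary suprema, so both sides of the identity
are suprema over triples `(y, y', y'')`: on the left over those with `θ(θ(y,y'),y'') = ŷ`,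
weighted by `ℓ(y,y') ℓ(θ(y,y'),y'')`, on the right over those with `θ(y,θ(y',y'')) = ŷ`,
weighted by `ℓ(y,θ(y',y'')) ℓ(y',y'')`. Associativity of `θ` says that the two index sets
coincide, and the cocycle condition that the weights agree on them.
-/

section Odot

variable {Y : Type*} {θ : Y → Y → Option Y} {ℓ : Y → Y → ℝ≥0∞}

theorem extTheta_some_right_eq_some_iff {o : Option Y} {y'' ŷ : Y} :
    extTheta θ o (some y'') = some ŷ ↔ ∃ a, o = some a ∧ θ a y'' = some ŷ := by
  cases o <;> simp [extTheta]

theorem extTheta_some_left_eq_some_iff {o : Option Y} {y ŷ : Y} :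
    extTheta θ (some y) o = some ŷ ↔ ∃ b, o = some b ∧ θ y b = some ŷ := by
  cases o <;> simp [extTheta]

theorem exists_theta_theta_eq_some_iff
    (hθ : ∀ a b c : Option Y,
      extTheta θ (extTheta θ a b) c = extTheta θ a (extTheta θ b c))
    {y y' y'' ŷ : Y} :
    (∃ a, θ y y' = some a ∧ θ a y'' = some ŷ) ↔
      ∃ b, θ y' y'' = some b ∧ θ y b = some ŷ := by
  rw [← extTheta_some_right_eq_some_iff, ← extTheta_some_left_eq_some_iff]
  exact Eq.to_iff (congrArg (· = some ŷ) (hθ (some y) (some y') (some y'')))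

theorem ell_mul_ell_of_theta_eq_some
    (hℓ : ∀ y y' y'' : Y,
      ℓ y y' * extEll ℓ (θ y y') (some y'') =
        extEll ℓ (some y) (θ y' y'') * ℓ y' y'')
    {y y' y'' a b : Y} (ha : θ y y' = some a) (hb : θ y' y'' = some b) :
    ℓ y y' * ℓ a y'' = ℓ y b * ℓ y' y'' := by
  simpa [ha, hb, extEll] using hℓ y y' y''

theorem odot_apply_le_iff {f f' : Y → ℝ≥0∞} {c : ℝ≥0∞} {ŷ : Y} :
    odot θ ℓ f f' ŷ ≤ c ↔ ∀ y y', θ y y' = some ŷ → ℓ y y' * f y * f' y' ≤ c := by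
  simp only [odot, iSup_le_iff]

theorem mul_odot_apply_le_iff {f f' : Y → ℝ≥0∞} {k c : ℝ≥0∞} {ŷ : Y} :
    k * odot θ ℓ f f' ŷ ≤ c ↔
      ∀ y y', θ y y' = some ŷ → k * (ℓ y y' * f y * f' y') ≤ c := by
  simp only [odot, ENNReal.mul_iSup, iSup_le_iff]

theorem mul_odot_apply_mul_le_iff {f f' : Y → ℝ≥0∞} {k m c : ℝ≥0∞} {ŷ : Y} :
    k * odot θ ℓ f f' ŷ * m ≤ c ↔
      ∀ y y', θ y y' = some ŷ → k * (ℓ y y' * f y * f' y') * m ≤ c := by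
  simp only [odot, ENNReal.mul_iSup, ENNReal.iSup_mul, iSup_le_iff]

theorem odot_odot_apply_le_iff {f f' f'' : Y → ℝ≥0∞} {c : ℝ≥0∞} {ŷ : Y} :
    odot θ ℓ (odot θ ℓ f f') f'' ŷ ≤ c ↔
      ∀ y y' y'' a, θ y y' = some a → θ a y'' = some ŷ →
        ℓ y y' * ℓ a y'' * (f y * f' y' * f'' y'') ≤ c := by
  have reassoc : ∀ a y'' y y', ℓ a y'' * (ℓ y y' * f y * f' y') * f'' y'' =
      ℓ y y' * ℓ a y'' * (f y * f' y' * f'' y'') := by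
    intros; ring
  simp only [odot_apply_le_iff, mul_odot_apply_mul_le_iff, reassoc]
  exact ⟨fun h y y' y'' a ha hay => h a y'' hay y y' ha,
    fun h a y'' hay y y' ha => h y y' y'' a ha hay⟩

theorem odot_apply_odot_le_iff {f f' f'' : Y → ℝ≥0∞} {c : ℝ≥0∞} {ŷ : Y} :
    odot θ ℓ f (odot θ ℓ f' f'') ŷ ≤ c ↔
      ∀ y y' y'' b, θ y' y'' = some b → θ y b = some ŷ →
        ℓ y b * ℓ y' y'' * (f y * f' y' * f'' y'') ≤ c := by
  have reassoc : ∀ y b y' y'', ℓ y b * f y * (ℓ y' y'' * f' y' * f'' y'') =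
      ℓ y b * ℓ y' y'' * (f y * f' y' * f'' y'') := by
    intros; ring
  simp only [odot_apply_le_iff, mul_odot_apply_le_iff, reassoc]
  exact ⟨fun h y y' y'' b hb hyb => h y b hyb y' y'' hb,
    fun h y b hyb y' y'' hb => h y y' y'' b hb hyb⟩

end Odot

theorem odot_assoc_general
    (Y : Type*) (θ : Y → Y → Option Y) (ℓ : Y → Y → ℝ≥0∞)
    (hθ : ∀ a b c : Option Y,
      extTheta θ (extTheta θ a b) c = extTheta θ a (extTheta θ b c))
    (hℓ : ∀ y y' y'' : Y,
      ℓ y y' * extEll ℓ (θ y y') (some y'') =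
        extEll ℓ (some y) (θ y' y'') * ℓ y' y'')
    (f f' f'' : Y → ℝ≥0∞) :
    odot θ ℓ (odot θ ℓ f f') f'' = odot θ ℓ f (odot θ ℓ f' f'') := by
  funext ŷ
  refine eq_of_forall_ge_iff fun c => ?_
  rw [odot_odot_apply_le_iff, odot_apply_odot_le_iff]
  constructor
  · intro h y y' y'' b hb hyb
    obtain ⟨a, ha, hay⟩ := exists_theta_theta_eq_some_iff hθ |>.2 ⟨b, hb, hyb⟩
    rw [← ell_mul_ell_of_theta_eq_some hℓ ha hb]
    exact h y y' y'' a ha hay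
  · intro h y y' y'' a ha hay
    obtain ⟨b, hb, hyb⟩ := exists_theta_theta_eq_some_iff hθ |>.1 ⟨a, ha, hay⟩
    rw [ell_mul_ell_of_theta_eq_some hℓ ha hb]
    exact h y y' y'' b hb hyb

/-- If the (extended) combination map `θ` is associative, the
potential `ℓ : Y × Y → [0,1]` vanishes off the domain `S` of `θ`, and `ℓ`
satisfies the cocycle condition
`ℓ(y,y') ℓ(θ(y,y'),y'') = ℓ(y,θ(y',y'')) ℓ(y',y'')`, then the operation `⊙`
is associative on bounded nonnegative functions. -/
theorem odot_assoc
    (Y : Type*) (θ : Y → Y → Option Y) (ℓ : Y → Y → ℝ≥0∞)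
    (hle : ∀ y y', ℓ y y' ≤ 1)
    (hS : ∀ y y', θ y y' = none → ℓ y y' = 0)
    (hθ : ∀ a b c : Option Y,
      extTheta θ (extTheta θ a b) c = extTheta θ a (extTheta θ b c))
    (hℓ : ∀ y y' y'' : Y,
      ℓ y y' * extEll ℓ (θ y y') (some y'') =
        extEll ℓ (some y) (θ y' y'') * ℓ y' y'')
    (f f' f'' : Y → ℝ≥0∞)
    (hf : (⨆ y, f y) ≠ ⊤) (hf' : (⨆ y, f' y) ≠ ⊤) (hf'' : (⨆ y, f'' y) ≠ ⊤) :
    odot θ ℓ (odot θ ℓ f f') f'' = odot θ ℓ f (odot θ ℓ f' f'') :=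
  odot_assoc_general Y θ ℓ hθ hℓ f f' f''
end
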